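/- arXiv:1812.00597 — 2 statements merged into one kernel-verified Lean document; each statement's English description precedes it below -/
import Mathlib

section
/- Let Γ : [0,1] → c(X*) be weak* scalarly integrable. Then Γ is Gelfand integrable in cw*k(X*): for every A ∈ 𝓛 there exists M(A) ∈ cw*k(X*) such that s(x, M(A)) = ∫_A s(x, Γ(t)) dλ(t) for every x ∈ X. -/
/-!
Put `φ(x) = ∫_A s(x, Γ t) dt` and `M(A) = {x' | x' ≤ φ}`. Since `φ` is sublinear, Hahn–Banach
gives `s(x, M(A)) = φ(x)` once `φ(x) ≤ c ‖x‖`; this bound also puts `M(A)` in a ball, so the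
weak*-closed set `M(A)` is weak* compact by Banach–Alaoglu. The bound comes from the seminorm
`p(x) = ∫ sup_{x' ∈ Γ t} |x'(x)| dt ≥ φ(x)`: by Fatou's lemma `p` is lower semicontinuous, and a
lower semicontinuous seminorm on a Banach space is continuous (Baire).
-/

open MeasureTheory Set

noncomputable section

def μ01 : Measure ℝ := volume.restrict (Icc (0:ℝ) 1)

/-- The support function `s(x, C) = sup {x*(x) : x* ∈ C}` of a set of functionals,
evaluated at a point `x` of the predual. -/
def suppFD {X : Type*} [NormedAddCommGroup X] [NormedSpace ℝ X]
    (x : X) (C : Set (StrongDual ℝ X)) : ℝ :=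
  sSup ((fun x' : StrongDual ℝ X => x' x) '' C)

open scoped ENNReal Pointwise

section SupportFunction

variable {X : Type*} [NormedAddCommGroup X] [NormedSpace ℝ X]
  {C : Set (StrongDual ℝ X)} {x y : X} {b : ℝ}

lemma suppFD_le (hC : C.Nonempty) (h : ∀ x' ∈ C, x' x ≤ b) : suppFD x C ≤ b :=
  csSup_le (hC.image _) (forall_mem_image.2 h)

lemma le_suppFD (hb : BddAbove ((fun x' : StrongDual ℝ X => x' x) '' C))
    {x' : StrongDual ℝ X} (h : x' ∈ C) : x' x ≤ suppFD x C :=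
  le_csSup hb (mem_image_of_mem _ h)

lemma suppFD_add_le (hC : C.Nonempty)
    (hx : BddAbove ((fun x' : StrongDual ℝ X => x' x) '' C))
    (hy : BddAbove ((fun x' : StrongDual ℝ X => x' y) '' C)) :
    suppFD (x + y) C ≤ suppFD x C + suppFD y C :=
  suppFD_le hC fun x' hx' => by
    rw [map_add]; exact add_le_add (le_suppFD hx hx') (le_suppFD hy hx')

lemma suppFD_smul {c : ℝ} (hc : 0 ≤ c) : suppFD (c • x) C = c * suppFD x C := by
  have : (fun x' : StrongDual ℝ X => x' (c • x)) '' C = c • (fun x' => x' x) '' C := by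
    rw [← image_smul, image_image]; simp
  rw [suppFD, this, Real.sSup_smul_of_nonneg hc, smul_eq_mul, suppFD]

lemma integral_suppFD_smul {α : Type*} [MeasurableSpace α] {μ : Measure α}
    {Γ : α → Set (StrongDual ℝ X)} {r : ℝ} (hr : 0 ≤ r) :
    ∫ t, suppFD (r • x) (Γ t) ∂μ = r * ∫ t, suppFD x (Γ t) ∂μ := by
  simp only [suppFD_smul hr, integral_const_mul]

end SupportFunction

section SupEnorm

variable {X : Type*} [NormedAddCommGroup X] [NormedSpace ℝ X]
  {C : Set (StrongDual ℝ X)} {x y : X}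

/-- Valued in `ℝ≥0∞`, so that it is a lower semicontinuous function of `x` for every `C`. -/
def supEnorm (C : Set (StrongDual ℝ X)) (x : X) : ℝ≥0∞ := ⨆ x' ∈ C, ‖x' x‖ₑ

lemma enorm_apply_le_supEnorm {x' : StrongDual ℝ X} (hx' : x' ∈ C) : ‖x' x‖ₑ ≤ supEnorm C x :=
  le_iSup₂ (f := fun x' _ => ‖x' x‖ₑ) x' hx'

lemma supEnorm_add_le : supEnorm C (x + y) ≤ supEnorm C x + supEnorm C y :=
  iSup₂_le fun x' hx' => by
    rw [map_add]
    exact (enorm_add_le _ _).trans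
      (add_le_add (enorm_apply_le_supEnorm hx') (enorm_apply_le_supEnorm hx'))

lemma supEnorm_smul (c : ℝ) : supEnorm C (c • x) = ‖c‖ₑ * supEnorm C x := by
  simp only [supEnorm, map_smul, smul_eq_mul, enorm_mul, ENNReal.mul_iSup]

lemma lowerSemicontinuous_supEnorm : LowerSemicontinuous (supEnorm C) :=
  lowerSemicontinuous_biSup fun x' _ => (continuous_enorm.comp x'.continuous).lowerSemicontinuous

lemma supEnorm_eq_ofReal_max (hC : C.Nonempty)
    (hx : BddAbove ((fun x' : StrongDual ℝ X => x' x) '' C))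
    (hnx : BddAbove ((fun x' : StrongDual ℝ X => x' (-x)) '' C)) :
    supEnorm C x = ENNReal.ofReal (max (suppFD x C) (suppFD (-x) C)) := by
  refine le_antisymm (iSup₂_le fun x' hx' => ?_) ?_
  · have hneg := le_suppFD hnx hx'
    rw [map_neg] at hneg
    rw [Real.enorm_eq_ofReal_abs, abs_eq_max_neg]
    exact ENNReal.ofReal_le_ofReal (max_le_max (le_suppFD hx hx') hneg)
  · rcases eq_or_ne (supEnorm C x) ⊤ with htop | htop
    · exact htop ▸ le_top
    have habs : ∀ x' ∈ C, |x' x| ≤ (supEnorm C x).toReal := fun x' hx' => by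
      rw [← Real.norm_eq_abs, ← toReal_enorm]
      exact ENNReal.toReal_mono htop (enorm_apply_le_supEnorm hx')
    refine (ENNReal.ofReal_le_iff_le_toReal htop).2 (max_le ?_ ?_)
    · exact suppFD_le hC fun x' hx' => (le_abs_self _).trans (habs x' hx')
    · exact suppFD_le hC fun x' hx' => by
        rw [map_neg]; exact (neg_le_abs _).trans (habs x' hx')

end SupEnorm

lemma lowerSemicontinuous_lintegral {X α : Type*} [TopologicalSpace X] [FirstCountableTopology X]
    [MeasurableSpace α] {μ : Measure α} {F : X → α → ℝ≥0∞}
    (hF : ∀ t, LowerSemicontinuous fun x => F x t) (hFm : ∀ x, AEMeasurable (F x) μ) :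
    LowerSemicontinuous fun x => ∫⁻ t, F x t ∂μ :=
  lowerSemicontinuous_iff_le_liminf.2 fun x =>
    (lintegral_mono fun t => (hF t).le_liminf x).trans (lintegral_liminf_le' hFm)

lemma LowerSemicontinuous.ennreal_toReal {X : Type*} [TopologicalSpace X] {f : X → ℝ≥0∞}
    (hf : LowerSemicontinuous f) (hfin : ∀ x, f x ≠ ⊤) :
    LowerSemicontinuous fun x => (f x).toReal := by
  intro x y hy
  rcases lt_or_ge y 0 with hy0 | hy0
  · exact Filter.Eventually.of_forall fun z => hy0.trans_le ENNReal.toReal_nonneg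
  · filter_upwards [hf x _ ((ENNReal.ofReal_lt_iff_lt_toReal hy0 (hfin x)).2 hy)] with z hz
    exact (ENNReal.ofReal_lt_iff_lt_toReal hy0 (hfin z)).1 hz

section SublinearDomination

variable {X : Type*} [NormedAddCommGroup X] [NormedSpace ℝ X] {φ : X → ℝ} {c : ℝ}

/-- For sublinear `φ` this is the subdifferential of `φ` at `0`. -/
def functionalsBelow (φ : X → ℝ) : Set (StrongDual ℝ X) := {x' | ∀ x, x' x ≤ φ x}

@[simp]
lemma mem_functionalsBelow {x' : StrongDual ℝ X} :
    x' ∈ functionalsBelow φ ↔ ∀ x, x' x ≤ φ x :=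
  Iff.rfl

lemma convex_functionalsBelow : Convex ℝ (functionalsBelow φ) := by
  have : functionalsBelow φ = ⋂ x, {x' : StrongDual ℝ X | x' x ≤ φ x} := by
    ext; simp
  rw [this]
  exact convex_iInter fun x => convex_halfSpace_le (ContinuousLinearMap.apply ℝ ℝ x).isLinear _

lemma norm_apply_le_of_forall_le (hbound : ∀ x, φ x ≤ c * ‖x‖) (g : X →ₗ[ℝ] ℝ)
    (hg : ∀ x, g x ≤ φ x) (x : X) : ‖g x‖ ≤ c * ‖x‖ := by
  have hneg := (hg (-x)).trans (hbound (-x))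
  rw [map_neg, norm_neg] at hneg
  exact abs_le.2 ⟨by linarith, (hg x).trans (hbound x)⟩

lemma isCompact_functionalsBelow (hc : 0 ≤ c) (hbound : ∀ x, φ x ≤ c * ‖x‖) :
    IsCompact (StrongDual.toWeakDual '' functionalsBelow φ) := by
  have himage : StrongDual.toWeakDual '' functionalsBelow φ =
      ⋂ x, {w : WeakDual ℝ X | w x ≤ φ x} := by
    ext w
    simp only [mem_image, mem_functionalsBelow, mem_iInter, mem_ofPred_eq]
    exact ⟨by rintro ⟨x', hx', rfl⟩; exact hx', fun hw => ⟨WeakDual.toStrongDual w, hw, rfl⟩⟩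
  refine (WeakDual.isCompact_closedBall (0 : StrongDual ℝ X) c).of_isClosed_subset ?_ ?_
  · rw [himage]
    exact isClosed_iInter fun x => isClosed_Iic.preimage (WeakDual.eval_continuous x)
  · rintro _ ⟨x', hx', rfl⟩
    rw [mem_preimage, mem_closedBall_zero_iff]
    exact x'.opNorm_le_bound hc (norm_apply_le_of_forall_le hbound x'.toLinearMap hx')

lemma apply_zero_of_forall_smul (hsmul : ∀ r : ℝ, 0 < r → ∀ x, φ (r • x) = r * φ x) :
    φ 0 = 0 := by
  have := hsmul 2 two_pos 0
  rw [smul_zero] at this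
  linarith

lemma mul_le_apply_smul_of_sublinear (hsmul : ∀ r : ℝ, 0 < r → ∀ x, φ (r • x) = r * φ x)
    (hadd : ∀ x y, φ (x + y) ≤ φ x + φ y) (r : ℝ) (x : X) : r * φ x ≤ φ (r • x) := by
  have hzero := apply_zero_of_forall_smul hsmul
  rcases lt_trichotomy r 0 with hr | rfl | hr
  · have hpair := hadd x (-x)
    rw [add_neg_cancel, hzero] at hpair
    rw [← neg_neg r, neg_smul, ← smul_neg, hsmul (-r) (neg_pos.2 hr)]
    nlinarith
  · simp [hzero]
  · exact (hsmul r hr x).ge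

lemma exists_mem_functionalsBelow_eq (hsmul : ∀ r : ℝ, 0 < r → ∀ x, φ (r • x) = r * φ x)
    (hadd : ∀ x y, φ (x + y) ≤ φ x + φ y) (hbound : ∀ x, φ x ≤ c * ‖x‖) (x₀ : X) :
    ∃ g ∈ functionalsBelow φ, g x₀ = φ x₀ := by
  have hspan : ∀ r : ℝ, r • x₀ = 0 → r • φ x₀ = 0 := fun r hr => by
    rcases smul_eq_zero.1 hr with rfl | rfl
    · exact zero_smul _ _
    · rw [apply_zero_of_forall_smul hsmul, smul_zero]
  obtain ⟨g, hg_ext, hg_le⟩ := exists_extension_of_le_sublinear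
    (LinearPMap.mkSpanSingleton' x₀ (φ x₀) hspan) φ hsmul hadd (by
      rintro ⟨_, hv⟩
      obtain ⟨r, rfl⟩ := Submodule.mem_span_singleton.1 hv
      rw [LinearPMap.mkSpanSingleton'_apply]
      exact mul_le_apply_smul_of_sublinear hsmul hadd r x₀)
  refine ⟨g.mkContinuous c (norm_apply_le_of_forall_le hbound g hg_le), hg_le, ?_⟩
  rw [LinearMap.mkContinuous_apply, hg_ext ⟨x₀, Submodule.mem_span_singleton_self x₀⟩]
  exact LinearPMap.mkSpanSingleton'_apply_self _ _ _ _

lemma suppFD_functionalsBelow (hsmul : ∀ r : ℝ, 0 < r → ∀ x, φ (r • x) = r * φ x)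
    (hadd : ∀ x y, φ (x + y) ≤ φ x + φ y) (hbound : ∀ x, φ x ≤ c * ‖x‖) (x : X) :
    suppFD x (functionalsBelow φ) = φ x := by
  obtain ⟨g, hg, hgx⟩ := exists_mem_functionalsBelow_eq hsmul hadd hbound x
  refine le_antisymm (suppFD_le ⟨g, hg⟩ fun x' hx' => mem_functionalsBelow.1 hx' x) ?_
  rw [← hgx]
  exact le_suppFD ⟨φ x, forall_mem_image.2 fun x' hx' => mem_functionalsBelow.1 hx' x⟩ hg

end SublinearDomination

structure WeakStarScalarlyIntegrable {X α : Type*} [NormedAddCommGroup X] [NormedSpace ℝ X]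
    [MeasurableSpace α] (Γ : α → Set (StrongDual ℝ X)) (μ : Measure α) : Prop where
  nonempty : ∀ᵐ t ∂μ, (Γ t).Nonempty
  bddAbove : ∀ x : X, ∀ᵐ t ∂μ, BddAbove ((fun x' : StrongDual ℝ X => x' x) '' Γ t)
  integrable : ∀ x : X, Integrable (fun t => suppFD x (Γ t)) μ

namespace WeakStarScalarlyIntegrable

variable {X α : Type*} [NormedAddCommGroup X] [NormedSpace ℝ X] [MeasurableSpace α]
  {Γ : α → Set (StrongDual ℝ X)} {μ : Measure α}

lemma restrict (h : WeakStarScalarlyIntegrable Γ μ) (s : Set α) :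
    WeakStarScalarlyIntegrable Γ (μ.restrict s) :=
  ⟨ae_restrict_of_ae h.nonempty, fun x => ae_restrict_of_ae (h.bddAbove x),
    fun x => (h.integrable x).restrict⟩

lemma supEnorm_ae_eq (h : WeakStarScalarlyIntegrable Γ μ) (x : X) :
    (fun t => supEnorm (Γ t) x) =ᵐ[μ]
      fun t => ENNReal.ofReal (max (suppFD x (Γ t)) (suppFD (-x) (Γ t))) := by
  filter_upwards [h.nonempty, h.bddAbove x, h.bddAbove (-x)] with t hne hx hnx
  exact supEnorm_eq_ofReal_max hne hx hnx

lemma aemeasurable_supEnorm (h : WeakStarScalarlyIntegrable Γ μ) (x : X) :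
    AEMeasurable (fun t => supEnorm (Γ t) x) μ :=
  (((h.integrable x).sup (h.integrable (-x))).aemeasurable.ennreal_ofReal).congr
    (h.supEnorm_ae_eq x).symm

lemma lintegral_supEnorm_ne_top (h : WeakStarScalarlyIntegrable Γ μ) (x : X) :
    ∫⁻ t, supEnorm (Γ t) x ∂μ ≠ ⊤ := by
  rw [lintegral_congr_ae (h.supEnorm_ae_eq x)]
  exact ((h.integrable x).sup (h.integrable (-x))).lintegral_lt_top.ne

def seminorm (h : WeakStarScalarlyIntegrable Γ μ) : Seminorm ℝ X :=
  Seminorm.of (fun x => (∫⁻ t, supEnorm (Γ t) x ∂μ).toReal)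
    (fun x y => by
      have hx := h.lintegral_supEnorm_ne_top x
      have hy := h.lintegral_supEnorm_ne_top y
      rw [← ENNReal.toReal_add hx hy, ← lintegral_add_left' (h.aemeasurable_supEnorm x)]
      refine ENNReal.toReal_mono ?_ (lintegral_mono fun t => supEnorm_add_le)
      rw [lintegral_add_left' (h.aemeasurable_supEnorm x)]
      exact ENNReal.add_ne_top.2 ⟨hx, hy⟩)
    (fun r x => by
      simp only [supEnorm_smul, lintegral_const_mul' _ _ enorm_ne_top, ENNReal.toReal_mul,
        toReal_enorm])

lemma seminorm_apply (h : WeakStarScalarlyIntegrable Γ μ) (x : X) :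
    h.seminorm x = (∫⁻ t, supEnorm (Γ t) x ∂μ).toReal :=
  rfl

lemma continuous_seminorm [CompleteSpace X] (h : WeakStarScalarlyIntegrable Γ μ) :
    Continuous h.seminorm :=
  h.seminorm.continuous_of_lowerSemicontinuous <|
    (lowerSemicontinuous_lintegral (fun _ => lowerSemicontinuous_supEnorm)
      h.aemeasurable_supEnorm).ennreal_toReal h.lintegral_supEnorm_ne_top

lemma integral_suppFD_le_seminorm (h : WeakStarScalarlyIntegrable Γ μ) (x : X) :
    ∫ t, suppFD x (Γ t) ∂μ ≤ h.seminorm x := by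
  have hm := h.aemeasurable_supEnorm x
  have hfin := h.lintegral_supEnorm_ne_top x
  rw [seminorm_apply, ← integral_toReal hm (ae_lt_top' hm hfin)]
  refine integral_mono_ae (h.integrable x) (integrable_toReal_of_lintegral_ne_top hm hfin) ?_
  filter_upwards [h.supEnorm_ae_eq x] with t ht
  rw [ht, ENNReal.toReal_ofReal']
  exact le_max_of_le_left (le_max_left _ _)

lemma integral_suppFD_add_le (h : WeakStarScalarlyIntegrable Γ μ) (x y : X) :
    ∫ t, suppFD (x + y) (Γ t) ∂μ ≤ ∫ t, suppFD x (Γ t) ∂μ + ∫ t, suppFD y (Γ t) ∂μ := by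
  rw [← integral_add (h.integrable x) (h.integrable y)]
  refine integral_mono_ae (h.integrable (x + y)) ((h.integrable x).add (h.integrable y)) ?_
  filter_upwards [h.nonempty, h.bddAbove x, h.bddAbove y] with t hne hx hy
  exact suppFD_add_le hne hx hy

theorem exists_suppFD_eq_integral [CompleteSpace X] (h : WeakStarScalarlyIntegrable Γ μ) :
    ∃ M : Set (StrongDual ℝ X), M.Nonempty ∧ Convex ℝ M ∧
      IsCompact (StrongDual.toWeakDual '' M) ∧
      ∀ x : X, suppFD x M = ∫ t, suppFD x (Γ t) ∂μ := by
  obtain ⟨c, hc, hseminorm⟩ :=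
    h.seminorm.bound_of_continuous_normedSpace h.continuous_seminorm
  have hbound x : ∫ t, suppFD x (Γ t) ∂μ ≤ c * ‖x‖ :=
    (h.integral_suppFD_le_seminorm x).trans (hseminorm x)
  have hsmul (r : ℝ) (hr : 0 < r) (x : X) := integral_suppFD_smul (x := x) (μ := μ) (Γ := Γ) hr.le
  obtain ⟨g, hg, -⟩ := exists_mem_functionalsBelow_eq hsmul h.integral_suppFD_add_le hbound 0
  exact ⟨functionalsBelow _, ⟨g, hg⟩, convex_functionalsBelow,
    isCompact_functionalsBelow hc.le hbound,
    suppFD_functionalsBelow hsmul h.integral_suppFD_add_le hbound⟩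

end WeakStarScalarlyIntegrable

/-- Every weak* scalarly integrable multifunction
`Γ : [0,1] → c(X*)` is Gelfand integrable in `cw*k(X*)`: for every Lebesgue measurable
`A ⊆ [0,1]` there is a nonempty convex weak*-compact set `M ⊆ X*` with
`s(x, M) = ∫_A s(x, Γ(t)) dλ(t)` for every `x ∈ X`. -/
theorem gelfand_integrable_of_weakStar_scalarly_integrable
    {X : Type*} [NormedAddCommGroup X] [NormedSpace ℝ X] [CompleteSpace X]
    (Γ : ℝ → Set (StrongDual ℝ X))
    (hΓ : ∀ t ∈ Icc (0:ℝ) 1, (Γ t).Nonempty ∧ IsClosed (Γ t) ∧ Convex ℝ (Γ t))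
    (hscal : ∀ x : X,
      (∀ᵐ t ∂μ01, BddAbove ((fun x' : StrongDual ℝ X => x' x) '' Γ t)) ∧
      Integrable (fun t => suppFD x (Γ t)) μ01) :
    ∀ A : Set ℝ, A ⊆ Icc (0:ℝ) 1 → MeasurableSet A →
      ∃ M : Set (StrongDual ℝ X), M.Nonempty ∧ Convex ℝ M ∧
        IsCompact (StrongDual.toWeakDual '' M) ∧
        ∀ x : X, suppFD x M = ∫ t in A, suppFD x (Γ t) := by
  intro A hA _
  have hΓ_int : WeakStarScalarlyIntegrable Γ μ01 :=
    ⟨(ae_restrict_mem measurableSet_Icc).mono fun t ht => (hΓ t ht).1,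
      fun x => (hscal x).1, fun x => (hscal x).2⟩
  have hμA : μ01.restrict A = volume.restrict A := Measure.restrict_restrict_of_subset hA
  simpa only [hμA] using (hΓ_int.restrict A).exists_suppFD_eq_integral
end
end

section
/- Every scalarly integrable multifunction Γ : [0,1] → c(X) is Dunford integrable in cw*k(X**): for every A ∈ 𝓛 there exists M(A) ∈ cw*k(X**) such that s(x*, M(A)) = ∫_A s(x*, Γ(t)) dλ(t) for every x* ∈ X*. -/
/-!
Let `φ x* = ∫ s(x*, Γ t) dμ`. It is sublinear on `X*`, and it is dominated by the sublinear
functional `P x* = ∫ s(x*, Γ t)⁺ dμ`, which is lower semicontinuous by Fatou's lemma. The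
symmetrisation `P x* + P (-x*)` is then a lower semicontinuous seminorm on the Banach space `X*`,
hence continuous (Banach spaces are barrelled), so `φ ≤ C ‖·‖`. Consequently
`M = {x** ∈ X** | x** ≤ φ}` is norm-bounded and weak*-closed, hence weak*-compact
(Banach–Alaoglu), and Hahn–Banach gives for each `x*` an `x** ∈ M` with `x** x* = φ x*`,
so `s(·, M) = φ`.
-/

open MeasureTheory Set

noncomputable section

/-- The support function `s(x*, C) = sup {x*(x) : x ∈ C}`. -/
def suppF {X : Type*} [NormedAddCommGroup X] [NormedSpace ℝ X]
    (x' : StrongDual ℝ X) (C : Set X) : ℝ :=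
  sSup (x' '' C)

/-- The support function of a subset of the bidual `X**`, evaluated at `x* ∈ X*`:
`s(x*, C) = sup {x**(x*) : x** ∈ C}`. -/
def suppFBidual {X : Type*} [NormedAddCommGroup X] [NormedSpace ℝ X]
    (x' : StrongDual ℝ X)
    (C : Set (StrongDual ℝ (StrongDual ℝ X))) : ℝ :=
  sSup ((fun x'' : StrongDual ℝ (StrongDual ℝ X) => x'' x') '' C)

open Filter Topology ENNReal

section SublinearFunctional

variable {E : Type*}

theorem apply_zero_eq_zero_of_pos_homogeneous [AddCommGroup E] [Module ℝ E] {φ : E → ℝ}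
    (hsmul : ∀ c : ℝ, 0 < c → ∀ x, φ (c • x) = c * φ x) : φ 0 = 0 := by
  have h := hsmul 2 two_pos 0
  rw [smul_zero] at h
  linarith

theorem exists_linearMap_le_sublinear_eq [AddCommGroup E] [Module ℝ E] {φ : E → ℝ}
    (hsmul : ∀ c : ℝ, 0 < c → ∀ x, φ (c • x) = c * φ x) (hadd : ∀ x y, φ (x + y) ≤ φ x + φ y)
    (x : E) : ∃ g : E →ₗ[ℝ] ℝ, (∀ z, g z ≤ φ z) ∧ g x = φ x := by
  have hφ0 := apply_zero_eq_zero_of_pos_homogeneous hsmul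
  let f := LinearPMap.mkSpanSingleton' (σ := RingHom.id ℝ) x (φ x) fun c hc => by
    rcases smul_eq_zero.1 hc with rfl | rfl
    · simp
    · simp [hφ0]
  have hf : ∀ z : f.domain, f z ≤ φ z := by
    rintro ⟨z, hz⟩
    obtain ⟨c, rfl⟩ := Submodule.mem_span_singleton.1 hz
    rw [LinearPMap.mkSpanSingleton'_apply, RingHom.id_apply, smul_eq_mul]
    rcases lt_trichotomy c 0 with hc | rfl | hc
    · have h := hadd (c • x) ((-c) • x)
      rw [← add_smul, add_neg_cancel, zero_smul, hφ0, hsmul (-c) (by linarith) x] at h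
      linarith
    · simp [hφ0]
    · rw [hsmul c hc]
  obtain ⟨g, hgf, hgφ⟩ := exists_extension_of_le_sublinear f φ hsmul hadd hf
  refine ⟨g, hgφ, ?_⟩
  rw [hgf ⟨x, Submodule.mem_span_singleton_self x⟩]
  exact LinearPMap.mkSpanSingleton'_apply_self _ _ _ _

variable [NormedAddCommGroup E] [NormedSpace ℝ E] {φ : E → ℝ} {C : ℝ}

theorem LinearMap.norm_apply_le_of_apply_le (g : E →ₗ[ℝ] ℝ) (hg : ∀ z, g z ≤ C * ‖z‖) (z : E) :
    ‖g z‖ ≤ C * ‖z‖ := by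
  rw [Real.norm_eq_abs, abs_le]
  have h := hg (-z)
  rw [map_neg, norm_neg] at h
  exact ⟨by linarith, hg z⟩

theorem exists_isCompact_toWeakDual_sSup_eq_of_sublinear
    (hsmul : ∀ c : ℝ, 0 < c → ∀ x, φ (c • x) = c * φ x) (hadd : ∀ x y, φ (x + y) ≤ φ x + φ y)
    (hC : ∀ x, φ x ≤ C * ‖x‖) :
    ∃ M : Set (StrongDual ℝ E), M.Nonempty ∧ Convex ℝ M ∧
      IsCompact (StrongDual.toWeakDual '' M) ∧
      ∀ x, sSup ((fun G : StrongDual ℝ E => G x) '' M) = φ x := by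
  set M : Set (StrongDual ℝ E) := ⋂ z, {G | G z ≤ φ z}
  have hmem : ∀ G, G ∈ M ↔ ∀ z, G z ≤ φ z := fun G => mem_iInter
  have hsupport : ∀ x, ∃ G ∈ M, G x = φ x := fun x => by
    obtain ⟨g, hgφ, hgx⟩ := exists_linearMap_le_sublinear_eq hsmul hadd x
    exact ⟨g.mkContinuous C (g.norm_apply_le_of_apply_le fun z => (hgφ z).trans (hC z)),
      (hmem _).2 hgφ, hgx⟩
  have hbounded : Bornology.IsBounded M := by
    refine isBounded_iff_forall_norm_le.2 ⟨max C 0, fun G hG =>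
      G.opNorm_le_bound (le_max_right C 0) fun z => ?_⟩
    calc ‖G z‖ ≤ C * ‖z‖ :=
          G.toLinearMap.norm_apply_le_of_apply_le (fun z => ((hmem G).1 hG z).trans (hC z)) z
      _ ≤ max C 0 * ‖z‖ := by gcongr; exact le_max_left C 0
  refine ⟨M, (hsupport 0).imp fun G hG => hG.1, ?_, ?_, fun x => ?_⟩
  · exact convex_iInter fun z =>
      convex_halfSpace_le (ContinuousLinearMap.apply ℝ ℝ z).toLinearMap.isLinear (φ z)
  · rw [StrongDual.toWeakDual.image_eq_preimage_symm]
    apply WeakDual.isCompact_of_bounded_of_closed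
    · exact WeakDual.isBounded_toStrongDual_preimage_iff_isBounded.2 hbounded
    · exact isClosed_iInter fun z => isClosed_Iic.preimage (WeakDual.eval_continuous z)
  · obtain ⟨G, hGM, hGx⟩ := hsupport x
    refine IsGreatest.csSup_eq ⟨⟨G, hGM, hGx⟩, ?_⟩
    rintro _ ⟨H, hH, rfl⟩
    exact (hmem H).1 hH x

theorem LowerSemicontinuous.exists_le_mul_norm_of_sublinear [CompleteSpace E] {P : E → ℝ}
    (hP : LowerSemicontinuous P) (hsmul : ∀ c : ℝ, 0 < c → ∀ x, P (c • x) = c * P x)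
    (hadd : ∀ x y, P (x + y) ≤ P x + P y) (hnonneg : ∀ x, 0 ≤ P x) :
    ∃ C, ∀ x, P x ≤ C * ‖x‖ := by
  have hP0 := apply_zero_eq_zero_of_pos_homogeneous hsmul
  let p : Seminorm ℝ E := Seminorm.of (fun x => P x + P (-x))
    (fun x y => by
      rw [neg_add]
      linarith [hadd x y, hadd (-x) (-y)])
    (fun a x => by
      rcases lt_trichotomy a 0 with ha | rfl | ha
      · rw [Real.norm_of_nonpos ha.le, show a • x = (-a) • -x by simp,
          show -((-a) • -x) = (-a) • x by simp, hsmul _ (neg_pos.2 ha), hsmul _ (neg_pos.2 ha)]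
        ring
      · simp [hP0]
      · rw [Real.norm_of_nonneg ha.le, ← smul_neg, hsmul a ha, hsmul a ha]
        ring)
  have hp : Continuous p :=
    p.continuous_of_lowerSemicontinuous (hP.add (hP.comp continuous_neg))
  obtain ⟨C, -, hC⟩ := p.bound_of_continuous_normedSpace hp
  exact ⟨C, fun x => (le_add_of_nonneg_right (hnonneg (-x))).trans (hC x)⟩

end SublinearFunctional

section SupportFunction

variable {X : Type*} [NormedAddCommGroup X] [NormedSpace ℝ X] {C : Set X} {x' y' : StrongDual ℝ X}

theorem apply_le_suppF (h : BddAbove (x' '' C)) {x : X} (hx : x ∈ C) : x' x ≤ suppF x' C :=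
  le_csSup h (mem_image_of_mem x' hx)

theorem suppF_add_le (hx' : BddAbove (x' '' C)) (hy' : BddAbove (y' '' C)) :
    suppF (x' + y') C ≤ suppF x' C + suppF y' C := by
  rcases C.eq_empty_or_nonempty with rfl | hC
  · simp [suppF]
  refine csSup_le (hC.image _) ?_
  rintro _ ⟨x, hx, rfl⟩
  exact add_le_add (apply_le_suppF hx' hx) (apply_le_suppF hy' hx)

theorem suppF_smul {c : ℝ} (hc : 0 ≤ c) (x' : StrongDual ℝ X) (C : Set X) :
    suppF (c • x') C = c * suppF x' C := by
  rw [suppF, suppF, ← smul_eq_mul, ← Real.sSup_smul_of_nonneg hc, ← image_smul, image_image]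
  rfl

theorem ofReal_suppF_le_liminf {u : ℕ → StrongDual ℝ X}
    (hu : Tendsto u atTop (𝓝 x')) (hbdd : ∀ k, BddAbove (u k '' C)) :
    ENNReal.ofReal (suppF x' C) ≤
      liminf (fun k => ENNReal.ofReal (suppF (u k) C)) atTop := by
  set L := liminf (fun k => ENNReal.ofReal (suppF (u k) C)) atTop
  have hpoint : ∀ x ∈ C, ENNReal.ofReal (x' x) ≤ L := fun x hx => by
    have hlim : Tendsto (fun k => ENNReal.ofReal (u k x)) atTop (𝓝 (ENNReal.ofReal (x' x))) :=
      (ENNReal.continuous_ofReal.tendsto _).comp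
        (((ContinuousLinearMap.apply ℝ ℝ x).continuous.tendsto x').comp hu)
    rw [← hlim.liminf_eq]
    exact liminf_le_liminf
      (.of_forall fun k => ENNReal.ofReal_le_ofReal (apply_le_suppF (hbdd k) hx))
  rcases eq_or_ne L ⊤ with hL | hL
  · exact hL ▸ le_top
  rw [ENNReal.ofReal_le_iff_le_toReal hL]
  -- `Real.sSup_le` also covers an empty or unbounded `x' '' C`, where `suppF` is the junk value `0`
  refine Real.sSup_le ?_ ENNReal.toReal_nonneg
  rintro _ ⟨x, hx, rfl⟩
  exact (ENNReal.ofReal_le_iff_le_toReal hL).1 (hpoint x hx)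

end SupportFunction

section Integral

variable {X Ω : Type*} [NormedAddCommGroup X] [NormedSpace ℝ X] [MeasurableSpace Ω]
  {μ : Measure Ω} {Γ : Ω → Set X}

def ScalarlyIntegrable (Γ : Ω → Set X) (μ : Measure Ω) : Prop :=
  ∀ x' : StrongDual ℝ X, (∀ᵐ t ∂μ, BddAbove (x' '' Γ t)) ∧ Integrable (fun t => suppF x' (Γ t)) μ

theorem integral_suppF_smul {c : ℝ} (hc : 0 ≤ c) (x' : StrongDual ℝ X) :
    ∫ t, suppF (c • x') (Γ t) ∂μ = c * ∫ t, suppF x' (Γ t) ∂μ := by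
  simp_rw [suppF_smul hc]
  exact integral_const_mul c _

theorem integral_posPart_suppF_smul {c : ℝ} (hc : 0 ≤ c) (x' : StrongDual ℝ X) :
    ∫ t, max (suppF (c • x') (Γ t)) 0 ∂μ = c * ∫ t, max (suppF x' (Γ t)) 0 ∂μ := by
  have hmax : ∀ a : ℝ, max (c * a) 0 = c * max a 0 := fun a => by
    rw [mul_max_of_nonneg _ _ hc, mul_zero]
  simp_rw [suppF_smul hc, hmax]
  exact integral_const_mul c _

namespace ScalarlyIntegrable

theorem restrict (hΓ : ScalarlyIntegrable Γ μ) (s : Set Ω) :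
    ScalarlyIntegrable Γ (μ.restrict s) :=
  fun x' => ⟨ae_restrict_of_ae (hΓ x').1, (hΓ x').2.restrict⟩

theorem integral_suppF_add_le (hΓ : ScalarlyIntegrable Γ μ) (x' y' : StrongDual ℝ X) :
    ∫ t, suppF (x' + y') (Γ t) ∂μ ≤ ∫ t, suppF x' (Γ t) ∂μ + ∫ t, suppF y' (Γ t) ∂μ := by
  rw [← integral_add (hΓ x').2 (hΓ y').2]
  refine integral_mono_ae (hΓ _).2 ((hΓ x').2.add (hΓ y').2) ?_
  filter_upwards [(hΓ x').1, (hΓ y').1] with t hx hy using suppF_add_le hx hy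

theorem integral_posPart_suppF_add_le (hΓ : ScalarlyIntegrable Γ μ) (x' y' : StrongDual ℝ X) :
    ∫ t, max (suppF (x' + y') (Γ t)) 0 ∂μ ≤
      ∫ t, max (suppF x' (Γ t)) 0 ∂μ + ∫ t, max (suppF y' (Γ t)) 0 ∂μ := by
  rw [← integral_add (hΓ x').2.pos_part (hΓ y').2.pos_part]
  refine integral_mono_ae (hΓ _).2.pos_part ((hΓ x').2.pos_part.add (hΓ y').2.pos_part) ?_
  filter_upwards [(hΓ x').1, (hΓ y').1] with t hx hy
  exact max_le ((suppF_add_le hx hy).trans (add_le_add (le_max_left _ _) (le_max_left _ _)))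
    (add_nonneg (le_max_right _ _) (le_max_right _ _))

theorem isClosed_setOf_lintegral_le (hΓ : ScalarlyIntegrable Γ μ) (c : ℝ≥0∞) :
    IsClosed {x' : StrongDual ℝ X | ∫⁻ t, ENNReal.ofReal (suppF x' (Γ t)) ∂μ ≤ c} := by
  refine IsSeqClosed.isClosed fun u x' hu hlim => ?_
  have hbdd : ∀ᵐ t ∂μ, ∀ k, BddAbove (u k '' Γ t) := ae_all_iff.2 fun k => (hΓ (u k)).1
  calc ∫⁻ t, ENNReal.ofReal (suppF x' (Γ t)) ∂μ
      ≤ ∫⁻ t, liminf (fun k => ENNReal.ofReal (suppF (u k) (Γ t))) atTop ∂μ :=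
        lintegral_mono_ae (hbdd.mono fun t ht => ofReal_suppF_le_liminf hlim ht)
    _ ≤ liminf (fun k => ∫⁻ t, ENNReal.ofReal (suppF (u k) (Γ t)) ∂μ) atTop :=
        lintegral_liminf_le' fun k => (hΓ (u k)).2.aemeasurable.ennreal_ofReal
    _ ≤ c := (liminf_le_liminf (.of_forall hu)).trans (liminf_const c).le

theorem lowerSemicontinuous_integral_posPart_suppF (hΓ : ScalarlyIntegrable Γ μ) :
    LowerSemicontinuous fun x' : StrongDual ℝ X => ∫ t, max (suppF x' (Γ t)) 0 ∂μ := by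
  refine lowerSemicontinuous_iff_isClosed_preimage.2 fun y => ?_
  rcases lt_or_ge y 0 with hy | hy
  · convert isClosed_empty
    refine eq_empty_of_forall_notMem fun x' hx' => hy.not_ge ?_
    exact (integral_nonneg fun t => le_max_right _ _).trans hx'
  · convert hΓ.isClosed_setOf_lintegral_le (ENNReal.ofReal y) using 1
    ext x'
    rw [mem_preimage, mem_Iic, mem_ofPred_eq, ← ENNReal.ofReal_le_ofReal_iff hy,
      ofReal_integral_eq_lintegral_ofReal (hΓ x').2.pos_part
        (.of_forall fun t => le_max_right _ _)]
    simp

theorem exists_dunford_integral (hΓ : ScalarlyIntegrable Γ μ) :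
    ∃ M : Set (StrongDual ℝ (StrongDual ℝ X)), M.Nonempty ∧ Convex ℝ M ∧
      IsCompact (StrongDual.toWeakDual '' M) ∧
      ∀ x' : StrongDual ℝ X, suppFBidual x' M = ∫ t, suppF x' (Γ t) ∂μ := by
  obtain ⟨C, hC⟩ := hΓ.lowerSemicontinuous_integral_posPart_suppF.exists_le_mul_norm_of_sublinear
    (fun c hc => integral_posPart_suppF_smul hc.le) hΓ.integral_posPart_suppF_add_le
    (fun x' => integral_nonneg fun t => le_max_right _ _)
  exact exists_isCompact_toWeakDual_sSup_eq_of_sublinear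
    (fun c hc => integral_suppF_smul hc.le) hΓ.integral_suppF_add_le fun x' =>
      (integral_mono (hΓ x').2 (hΓ x').2.pos_part fun t => le_max_left _ _).trans (hC x')

end ScalarlyIntegrable

end Integral

theorem dunford_integrable_of_scalarly_integrable_general
    {X : Type*} [NormedAddCommGroup X] [NormedSpace ℝ X]
    (Γ : ℝ → Set X)
    (hscal : ∀ x' : StrongDual ℝ X,
      (∀ᵐ t ∂μ01, BddAbove (x' '' Γ t)) ∧
      Integrable (fun t => suppF x' (Γ t)) μ01) :
    ∀ A : Set ℝ, A ⊆ Icc (0:ℝ) 1 → MeasurableSet A →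
      ∃ M : Set (StrongDual ℝ (StrongDual ℝ X)), M.Nonempty ∧ Convex ℝ M ∧
        IsCompact (StrongDual.toWeakDual '' M) ∧
        ∀ x' : StrongDual ℝ X, suppFBidual x' M = ∫ t in A, suppF x' (Γ t) := by
  intro A hA _
  have hrestrict : μ01.restrict A = volume.restrict A := Measure.restrict_restrict_of_subset hA
  have hΓ : ScalarlyIntegrable Γ (volume.restrict A) :=
    hrestrict ▸ ScalarlyIntegrable.restrict hscal A
  exact hΓ.exists_dunford_integral

/-- Every scalarly integrable multifunction `Γ : [0,1] → c(X)` is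
Dunford integrable in `cw*k(X**)`: for every Lebesgue measurable `A ⊆ [0,1]` there is a
nonempty convex σ(X**,X*)-compact set `M ⊆ X**` with
`s(x*, M) = ∫_A s(x*, Γ(t)) dλ(t)` for every `x* ∈ X*`. -/
theorem dunford_integrable_of_scalarly_integrable
    {X : Type*} [NormedAddCommGroup X] [NormedSpace ℝ X] [CompleteSpace X]
    (Γ : ℝ → Set X)
    (hΓ : ∀ t ∈ Icc (0:ℝ) 1, (Γ t).Nonempty ∧ IsClosed (Γ t) ∧ Convex ℝ (Γ t))
    (hscal : ∀ x' : StrongDual ℝ X,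
      (∀ᵐ t ∂μ01, BddAbove (x' '' Γ t)) ∧
      Integrable (fun t => suppF x' (Γ t)) μ01) :
    ∀ A : Set ℝ, A ⊆ Icc (0:ℝ) 1 → MeasurableSet A →
      ∃ M : Set (StrongDual ℝ (StrongDual ℝ X)), M.Nonempty ∧ Convex ℝ M ∧
        IsCompact (StrongDual.toWeakDual '' M) ∧
        ∀ x' : StrongDual ℝ X, suppFBidual x' M = ∫ t in A, suppF x' (Γ t) :=
  dunford_integrable_of_scalarly_integrable_general Γ hscal

end
end
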